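/- Binary robustness certificate: let f(x) = ⟨w, φ_D(x)⟩ with w ≠ 0, where φ_D has an encoder gap τ_s(x) > 2ν on input x, D is s-RIP with constant η_s < 1, and the normalized margin satisfies f(x) ≥ ρ_x‖w‖₂ with ρ_x > ν/√(1−η_s). Then for every v with ‖v‖₂ ≤ ν, sign(⟨w, φ_D(x+v)⟩) = sign(⟨w, φ_D(x)⟩). -/

import Mathlib

/-!
Comparing the first-order optimality conditions of the Lasso at `x` and at `x + v` (monotonicity
of the subdifferential of `λ‖·‖₁`) gives `⟨v - Dδ, Dδ⟩ ≥ 0` for `δ = φ(x + v) - φ(x)`, hence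
`‖Dδ‖₂ ≤ ‖v‖₂` and `‖v - Dδ‖₂ ≤ ‖v‖₂`. The latter moves every correlation `⟨Dᵢ, x - Dφ(x)⟩` by at
most `ν`, so on the `p - s` coordinates where the encoder gap exceeds `2ν` both codes vanish. Thus
`δ` is `s`-sparse and the RIP turns `‖Dδ‖₂ ≤ ν` into `‖δ‖₂ ≤ ν / √(1 - η) < ρ`, which by
Cauchy–Schwarz cannot overcome the margin `⟨w, φ(x)⟩ ≥ ρ‖w‖₂`.
-/

open scoped BigOperators
open Finset

noncomputable def l2 {n : ℕ} (x : Fin n → ℝ) : ℝ := Real.sqrt (∑ i, (x i) ^ 2)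

noncomputable def l1 {n : ℕ} (x : Fin n → ℝ) : ℝ := ∑ i, |x i|

noncomputable def inp {n : ℕ} (x y : Fin n → ℝ) : ℝ := ∑ i, x i * y i

/-- The Lasso objective `z ↦ (1/2)‖x − Dz‖₂² + λ‖z‖₁`. -/
noncomputable def lassoObj {d p : ℕ} (D : Matrix (Fin d) (Fin p) ℝ) (lam : ℝ)
    (x : Fin d → ℝ) (z : Fin p → ℝ) : ℝ :=
  (1 / 2) * (l2 (x - D.mulVec z)) ^ 2 + lam * l1 z

open Matrix Filter Topology

section Euclidean

variable {n : ℕ}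

lemma l2_eq_norm (x : Fin n → ℝ) : l2 x = ‖WithLp.toLp 2 x‖ := by
  simp [l2, EuclideanSpace.norm_eq]

lemma l2_nonneg (x : Fin n → ℝ) : 0 ≤ l2 x := Real.sqrt_nonneg _

lemma l2_pos {x : Fin n → ℝ} (hx : x ≠ 0) : 0 < l2 x := by
  rw [l2_eq_norm, norm_pos_iff]
  exact fun h => hx (by simpa using congrArg WithLp.ofLp h)

lemma l2_sq (x : Fin n → ℝ) : l2 x ^ 2 = x ⬝ᵥ x := by
  rw [l2, Real.sq_sqrt (by positivity)]
  simp [dotProduct, sq]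

lemma abs_dotProduct_le (x y : Fin n → ℝ) : |x ⬝ᵥ y| ≤ l2 x * l2 y := by
  have h : x ⬝ᵥ y = inner ℝ (WithLp.toLp 2 y) (WithLp.toLp 2 x) := by
    simp [EuclideanSpace.inner_toLp_toLp]
  rw [h, l2_eq_norm, l2_eq_norm, mul_comm]
  exact abs_real_inner_le_norm _ _

lemma l2_le_and_l2_sub_le_of_nonneg_dotProduct {a v : Fin n → ℝ} (h : 0 ≤ (v - a) ⬝ᵥ a) :
    l2 a ≤ l2 v ∧ l2 (v - a) ≤ l2 v := by
  have hv : v ⬝ᵥ v = a ⬝ᵥ a + (v - a) ⬝ᵥ (v - a) + 2 * ((v - a) ⬝ᵥ a) := by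
    simp only [sub_dotProduct, dotProduct_sub, dotProduct_comm a v]
    ring
  have hsq : l2 a ^ 2 + l2 (v - a) ^ 2 ≤ l2 v ^ 2 := by
    rw [l2_sq, l2_sq, l2_sq]
    linarith
  simp only [← pow_le_pow_iff_left₀ (l2_nonneg _) (l2_nonneg v) two_ne_zero]
  constructor <;> linarith [sq_nonneg (l2 a), sq_nonneg (l2 (v - a))]

lemma l1_add_smul_le (α h : Fin n → ℝ) {t : ℝ} (ht0 : 0 ≤ t) (ht1 : t ≤ 1) :
    l1 (α + t • h) ≤ l1 α + t * (l1 (α + h) - l1 α) := by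
  have hcoord : ∀ i, |α i + t * h i| ≤ (1 - t) * |α i| + t * |α i + h i| := fun i =>
    calc |α i + t * h i| = |(1 - t) * α i + t * (α i + h i)| := by ring_nf
      _ ≤ |(1 - t) * α i| + |t * (α i + h i)| := abs_add_le _ _
      _ = (1 - t) * |α i| + t * |α i + h i| := by
        rw [abs_mul, abs_mul, abs_of_nonneg (sub_nonneg.2 ht1), abs_of_nonneg ht0]
  calc l1 (α + t • h) ≤ ∑ i, ((1 - t) * |α i| + t * |α i + h i|) :=
        Finset.sum_le_sum fun i _ => hcoord i
    _ = l1 α + t * (l1 (α + h) - l1 α) := by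
      simp only [l1, Finset.sum_add_distrib, ← Finset.mul_sum, Pi.add_apply]
      ring

lemma l1_add_single_neg (α : Fin n → ℝ) (i : Fin n) :
    l1 (α + Pi.single i (-α i)) = l1 α - |α i| := by
  have hcoord : ∀ j, |(α + (Pi.single i (-α i) : Fin n → ℝ)) j|
      = |α j| - (Pi.single i |α i| : Fin n → ℝ) j := by
    intro j
    rcases eq_or_ne j i with rfl | hj
    · simp
    · simp [hj]
  simp only [l1, hcoord, Finset.sum_sub_distrib, Finset.sum_pi_single', Finset.mem_univ, if_true]

end Euclidean

lemma le_div_sqrt_of_mul_sq_le {a b c : ℝ} (hc : 0 < c) (hb : 0 ≤ b) (h : c * a ^ 2 ≤ b ^ 2) :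
    a ≤ b / √c := by
  rw [le_div_iff₀ (Real.sqrt_pos.2 hc)]
  calc a * √c ≤ |a| * √c := by gcongr; exact le_abs_self a
    _ = √(c * a ^ 2) := by rw [Real.sqrt_mul hc.le, Real.sqrt_sq_eq_abs, mul_comm]
    _ ≤ √(b ^ 2) := Real.sqrt_le_sqrt h
    _ = b := Real.sqrt_sq hb

section Lasso

variable {d p : ℕ} (D : Matrix (Fin d) (Fin p) ℝ) (lam : ℝ)

def IsLassoMinimizer (u : Fin d → ℝ) (α : Fin p → ℝ) : Prop :=
  ∀ z, lassoObj D lam u α ≤ lassoObj D lam u z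

/-- Its `i`-th entry is the correlation `inp (fun r => D r i) (u - D.mulVec α)` of the
encoder gap. -/
def lassoCorr (u : Fin d → ℝ) (α : Fin p → ℝ) : Fin p → ℝ := Dᵀ *ᵥ (u - D *ᵥ α)

lemma lassoObj_add (u : Fin d → ℝ) (α h : Fin p → ℝ) :
    lassoObj D lam u (α + h) = lassoObj D lam u α - lassoCorr D u α ⬝ᵥ h
      + l2 (D *ᵥ h) ^ 2 / 2 + lam * (l1 (α + h) - l1 α) := by
  have hres : u - D *ᵥ (α + h) = (u - D *ᵥ α) - D *ᵥ h := by
    rw [mulVec_add]; abel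
  simp only [lassoObj, l2_sq, hres, lassoCorr, mulVec_transpose, ← dotProduct_mulVec,
    sub_dotProduct, dotProduct_sub]
  rw [dotProduct_comm (D *ᵥ h) u, dotProduct_comm (D *ᵥ h) (D *ᵥ α)]
  ring

lemma lassoCorr_add_sub (u v : Fin d → ℝ) (α β : Fin p → ℝ) :
    lassoCorr D (u + v) β - lassoCorr D u α = Dᵀ *ᵥ (v - D *ᵥ (β - α)) := by
  rw [lassoCorr, lassoCorr, ← mulVec_sub, mulVec_sub D β α]
  congr 1
  abel

lemma abs_transpose_mulVec_apply_le (hcols : ∀ i, l2 (fun r => D r i) ≤ 1)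
    (y : Fin d → ℝ) (i : Fin p) : |(Dᵀ *ᵥ y) i| ≤ l2 y :=
  calc |(Dᵀ *ᵥ y) i| ≤ l2 (fun r => D r i) * l2 y := abs_dotProduct_le _ _
    _ ≤ 1 * l2 y := by gcongr; exacts [l2_nonneg y, hcols i]
    _ = l2 y := one_mul _

variable {D lam}

namespace IsLassoMinimizer

variable {u : Fin d → ℝ} {α : Fin p → ℝ}

/-- First-order optimality: `lassoCorr D u α` is a subgradient of `lam • l1` at `α`. -/
theorem lassoCorr_dotProduct_le (hα : IsLassoMinimizer D lam u α) (hlam : 0 ≤ lam)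
    (h : Fin p → ℝ) : lassoCorr D u α ⬝ᵥ h ≤ lam * (l1 (α + h) - l1 α) := by
  set A := lassoCorr D u α ⬝ᵥ h - lam * (l1 (α + h) - l1 α)
  set B := l2 (D *ᵥ h) ^ 2 / 2
  -- minimality at `α + t • h` and convexity of `l1`, divided by `t`; then let `t → 0⁺`
  have hsmall : ∀ t ∈ Set.Ioc (0 : ℝ) 1, A ≤ t * B := by
    rintro t ⟨ht0, ht1⟩
    have hmin := hα (α + t • h)
    have hconv := l1_add_smul_le α h ht0.le ht1
    rw [lassoObj_add, dotProduct_smul, mulVec_smul, l2_sq, smul_dotProduct, dotProduct_smul,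
      ← l2_sq] at hmin
    simp only [smul_eq_mul] at hmin
    have : t * A ≤ t * (t * B) := by
      simp only [A, B]
      nlinarith [mul_le_mul_of_nonneg_left hconv hlam]
    exact le_of_mul_le_mul_left this ht0
  have hlim : Tendsto (fun t : ℝ => t * B) (𝓝[>] 0) (𝓝 0) :=
    ((continuous_mul_const B).tendsto' 0 0 (zero_mul B)).mono_left nhdsWithin_le_nhds
  have : A ≤ 0 := ge_of_tendsto hlim (Filter.mem_of_superset (Ioc_mem_nhdsGT one_pos) hsmall)
  linarith

theorem eq_zero_of_abs_lassoCorr_lt (hα : IsLassoMinimizer D lam u α) (hlam : 0 ≤ lam)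
    {i : Fin p} (hi : |lassoCorr D u α i| < lam) : α i = 0 := by
  have h := hα.lassoCorr_dotProduct_le hlam (Pi.single i (-α i))
  rw [dotProduct_single, l1_add_single_neg] at h
  have hle : lassoCorr D u α i * α i ≤ |lassoCorr D u α i| * |α i| := by
    rw [← abs_mul]; exact le_abs_self _
  by_contra hne
  nlinarith [abs_pos.2 hne]

end IsLassoMinimizer

/-- Monotonicity of the subdifferential of `lam • l1`. -/
theorem lasso_monotone (hlam : 0 ≤ lam) {u v : Fin d → ℝ} {α β : Fin p → ℝ}
    (hα : IsLassoMinimizer D lam u α) (hβ : IsLassoMinimizer D lam (u + v) β) :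
    0 ≤ (v - D *ᵥ (β - α)) ⬝ᵥ (D *ᵥ (β - α)) := by
  have h₁ := hα.lassoCorr_dotProduct_le hlam (β - α)
  have h₂ := hβ.lassoCorr_dotProduct_le hlam (α - β)
  rw [add_sub_cancel] at h₁
  rw [add_sub_cancel, ← neg_sub, dotProduct_neg] at h₂
  have hsum : 0 ≤ (lassoCorr D (u + v) β - lassoCorr D u α) ⬝ᵥ (β - α) := by
    rw [sub_dotProduct]; linarith
  rwa [lassoCorr_add_sub, mulVec_transpose, ← dotProduct_mulVec] at hsum

end Lasso

lemma card_filter_ne_zero_le {p s : ℕ} {I : Finset (Fin p)} (hI : I.card = p - s)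
    {δ : Fin p → ℝ} (hδ : ∀ i ∈ I, δ i = 0) : (univ.filter (fun i => δ i ≠ 0)).card ≤ s := by
  have hsub : univ.filter (fun i => δ i ≠ 0) ⊆ Iᶜ := fun i hi =>
    mem_compl.2 fun hiI => (mem_filter.1 hi).2 (hδ i hiI)
  have := card_le_card hsub
  rw [card_compl, hI, Fintype.card_fin] at this
  omega

theorem l2_sub_le_of_encoderGap {d p s : ℕ} {D : Matrix (Fin d) (Fin p) ℝ} {lam ν η : ℝ}
    (hlam : 0 ≤ lam) (hη : η < 1) (hcols : ∀ i, l2 (fun r => D r i) ≤ 1)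
    (hRIP : ∀ z : Fin p → ℝ, (univ.filter (fun i => z i ≠ 0)).card ≤ s →
      (1 - η) * l2 z ^ 2 ≤ l2 (D *ᵥ z) ^ 2)
    {u v : Fin d → ℝ} {α β : Fin p → ℝ}
    (hα : IsLassoMinimizer D lam u α) (hβ : IsLassoMinimizer D lam (u + v) β)
    (hgap : ∃ I : Finset (Fin p), I.card = p - s ∧ ∀ i ∈ I, 2 * ν < lam - |lassoCorr D u α i|)
    (hv : l2 v ≤ ν) :
    l2 (β - α) ≤ ν / √(1 - η) := by
  obtain ⟨I, hIcard, hIgap⟩ := hgap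
  have hν : 0 ≤ ν := (l2_nonneg v).trans hv
  obtain ⟨hDδ, hres⟩ := l2_le_and_l2_sub_le_of_nonneg_dotProduct (lasso_monotone hlam hα hβ)
  have hcorr : ∀ i, |lassoCorr D (u + v) β i - lassoCorr D u α i| ≤ l2 v := fun i => by
    rw [← Pi.sub_apply, lassoCorr_add_sub]
    exact (abs_transpose_mulVec_apply_le D hcols _ i).trans hres
  have hsupp : ∀ i ∈ I, (β - α) i = 0 := by
    intro i hi
    have hgapi := hIgap i hi
    have hαi := hα.eq_zero_of_abs_lassoCorr_lt hlam (by linarith)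
    have hβi := hβ.eq_zero_of_abs_lassoCorr_lt hlam (by
      linarith [abs_sub_abs_le_abs_sub (lassoCorr D (u + v) β i) (lassoCorr D u α i), hcorr i])
    simp [hαi, hβi]
  have hrip := hRIP (β - α) (card_filter_ne_zero_le hIcard hsupp)
  exact le_div_sqrt_of_mul_sq_le (sub_pos.2 hη) hν
    (hrip.trans (pow_le_pow_left₀ (l2_nonneg _) (hDδ.trans hv) 2))

theorem sign_inp_eq_of_l2_sub_le {p : ℕ} {w α β : Fin p → ℝ} {r ρ : ℝ} (hw : w ≠ 0)
    (hδ : l2 (β - α) ≤ r) (hρ : r < ρ) (hmargin : ρ * l2 w ≤ inp w α) :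
    Real.sign (inp w β) = Real.sign (inp w α) := by
  have hw₀ := l2_pos hw
  have hclose : |inp w (β - α)| < inp w α :=
    calc |inp w (β - α)| ≤ l2 w * l2 (β - α) := abs_dotProduct_le w (β - α)
      _ ≤ l2 w * r := by gcongr
      _ < l2 w * ρ := by gcongr
      _ ≤ inp w α := by linarith
  have hsplit : inp w β = inp w α + inp w (β - α) := by
    simp only [inp, Pi.sub_apply, mul_sub, Finset.sum_sub_distrib]
    ring
  have hα : 0 < inp w α := (abs_nonneg _).trans_lt hclose
  have hβ : 0 < inp w β := by linarith [neg_abs_le (inp w (β - α))]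
  rw [Real.sign_of_pos hα, Real.sign_of_pos hβ]

theorem stmt12_general {d p s : ℕ} (D : Matrix (Fin d) (Fin p) ℝ) (lam ν η : ℝ)
    (hlam : 0 < lam) (hη : η < 1)
    (hcols : ∀ i, l2 (fun r => D r i) = 1)
    (hRIP : ∀ z : Fin p → ℝ, (Finset.univ.filter (fun i => z i ≠ 0)).card ≤ s →
      (1 - η) * (l2 z) ^ 2 ≤ (l2 (D.mulVec z)) ^ 2)
    (φ : (Fin d → ℝ) → Fin p → ℝ)
    (hφ : ∀ u z, lassoObj D lam u (φ u) ≤ lassoObj D lam u z)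
    (x : Fin d → ℝ)
    (hgap : ∃ I : Finset (Fin p), I.card = p - s ∧
      ∀ i ∈ I, 2 * ν < lam - |inp (fun r => D r i) (x - D.mulVec (φ x))|)
    (w : Fin p → ℝ) (hw : w ≠ 0) (ρ : ℝ)
    (hρ : ν / Real.sqrt (1 - η) < ρ)
    (hmargin : ρ * l2 w ≤ inp w (φ x)) :
    ∀ v : Fin d → ℝ, l2 v ≤ ν →
      Real.sign (inp w (φ (x + v))) = Real.sign (inp w (φ x)) := by
  intro v hv
  have hstable : l2 (φ (x + v) - φ x) ≤ ν / √(1 - η) :=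
    l2_sub_le_of_encoderGap hlam.le hη (fun i => (hcols i).le) hRIP (hφ x) (hφ (x + v)) hgap hv
  exact sign_inp_eq_of_l2_sub_le hw hstable hρ hmargin

/-- binary robustness certificate for the supervised sparse coding model. -/
theorem stmt12 {d p s : ℕ} (D : Matrix (Fin d) (Fin p) ℝ) (lam ν η : ℝ)
    (hlam : 0 < lam) (hν : 0 ≤ ν) (hη0 : 0 ≤ η) (hη : η < 1)
    (hcols : ∀ i, l2 (fun r => D r i) = 1)
    (hRIP : ∀ z : Fin p → ℝ, (Finset.univ.filter (fun i => z i ≠ 0)).card ≤ s →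
      (1 - η) * (l2 z) ^ 2 ≤ (l2 (D.mulVec z)) ^ 2)
    (φ : (Fin d → ℝ) → Fin p → ℝ)
    (hφ : ∀ u z, lassoObj D lam u (φ u) ≤ lassoObj D lam u z)
    (x : Fin d → ℝ) (hx : l2 x ≤ 1)
    (hgap : ∃ I : Finset (Fin p), I.card = p - s ∧
      ∀ i ∈ I, 2 * ν < lam - |inp (fun r => D r i) (x - D.mulVec (φ x))|)
    (w : Fin p → ℝ) (hw : w ≠ 0) (ρ : ℝ)
    (hρ : ν / Real.sqrt (1 - η) < ρ)
    (hmargin : ρ * l2 w ≤ inp w (φ x)) :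
    ∀ v : Fin d → ℝ, l2 v ≤ ν →
      Real.sign (inp w (φ (x + v))) = Real.sign (inp w (φ x)) :=
  stmt12_general D lam ν η hlam hη hcols hRIP φ hφ x hgap w hw ρ hρ hmargin
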